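/- In the Bernoulli model setup with θ ≠ 0, if ε/τ ≥ ‖θ‖_∞, then the sequence s_n = 2Wτ Σ_{j : θ(j) > 0} θ(j) φ(τ√n/√(1 − τ²); ε/(θ(j)τ)) is strictly increasing for all n ≥ 1. -/

import Mathlib

open Real Finset MeasureTheory ProbabilityTheory

/-- The CDF of the standard normal distribution. -/
noncomputable def stdNormalCDF (x : ℝ) : ℝ := cdf (gaussianReal 0 1) x

/-- `phi δ x = 2Φ(x) − Φ(x(1+δ)) − Φ(x(1−δ))`. -/
noncomputable def phi (δ x : ℝ) : ℝ :=
  2 * stdNormalCDF x - stdNormalCDF (x * (1 + δ)) - stdNormalCDF (x * (1 - δ))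

/-- The strip center `s_n = 2Wτ Σ_{j : θ(j) > 0} θ(j) φ(τ√n/√(1−τ²); ε/(θ(j)τ))`. -/
noncomputable def berStrip (d : ℕ) (W ε : ℝ) (θ : Fin d → ℝ) (τ : ℝ) (n : ℕ) : ℝ :=
  2 * W * τ * ∑ j ∈ Finset.univ.filter (fun j => 0 < θ j),
    θ j * phi (ε / (θ j * τ)) (τ * Real.sqrt n / Real.sqrt (1 - τ ^ 2))

/-!
On `[0, ∞)` each `φ(·; δ)` with `δ ≥ 1` is strictly increasing: its derivative is
`2p(x) − (1+δ)p(x(1+δ)) + (δ−1)p(x(δ−1))` for the standard normal density `p`, and since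
`p` decreases in `|t|` the last term is at least `(δ−1)p(x(1+δ))`, so the derivative is at least
`2(p(x) − p(x(1+δ))) > 0`. The strong adversary condition `θ(j) ≤ ε/τ` is exactly `δ_j ≥ 1`
for every summand, and the argument `τ√n/√(1−τ²)` is strictly increasing in `n`.
-/

open scoped NNReal

namespace ProbabilityTheory

lemma continuous_gaussianPDFReal (μ : ℝ) (v : ℝ≥0) : Continuous (gaussianPDFReal μ v) := by
  rw [gaussianPDFReal_def]
  fun_prop

lemma gaussianPDFReal_le_of_sq_le {μ : ℝ} {v : ℝ≥0} {a b : ℝ} (h : (a - μ) ^ 2 ≤ (b - μ) ^ 2) :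
    gaussianPDFReal μ v b ≤ gaussianPDFReal μ v a := by
  simp only [gaussianPDFReal]
  gcongr

lemma gaussianPDFReal_lt_of_sq_lt {μ : ℝ} {v : ℝ≥0} (hv : v ≠ 0) {a b : ℝ}
    (h : (a - μ) ^ 2 < (b - μ) ^ 2) : gaussianPDFReal μ v b < gaussianPDFReal μ v a := by
  simp only [gaussianPDFReal]
  gcongr

lemma cdf_gaussianReal_eq_integral (μ : ℝ) {v : ℝ≥0} (hv : v ≠ 0) (x : ℝ) :
    cdf (gaussianReal μ v) x = ∫ t in Set.Iic x, gaussianPDFReal μ v t := by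
  rw [cdf_eq_real, measureReal_def, gaussianReal_apply_eq_integral μ hv, ENNReal.toReal_ofReal]
  exact integral_nonneg fun t => gaussianPDFReal_nonneg _ _ _

lemma hasDerivAt_cdf_gaussianReal (μ : ℝ) {v : ℝ≥0} (hv : v ≠ 0) (x : ℝ) :
    HasDerivAt (cdf (gaussianReal μ v)) (gaussianPDFReal μ v x) x := by
  have hint := integrable_gaussianPDFReal μ v
  have hcont := continuous_gaussianPDFReal μ v
  have hsplit : ⇑(cdf (gaussianReal μ v)) = fun y =>
      (∫ t in Set.Iic 0, gaussianPDFReal μ v t) + ∫ t in (0 : ℝ)..y, gaussianPDFReal μ v t := by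
    funext y
    rw [cdf_gaussianReal_eq_integral μ hv,
      ← intervalIntegral.integral_Iic_sub_Iic hint.integrableOn hint.integrableOn]
    ring
  rw [hsplit]
  exact (intervalIntegral.integral_hasDerivAt_right hint.intervalIntegrable
    hcont.stronglyMeasurable.stronglyMeasurableAtFilter hcont.continuousAt).const_add _

end ProbabilityTheory

lemma hasDerivAt_phi (δ x : ℝ) :
    HasDerivAt (phi δ)
      (2 * gaussianPDFReal 0 1 x - gaussianPDFReal 0 1 (x * (1 + δ)) * (1 + δ)
        - gaussianPDFReal 0 1 (x * (1 - δ)) * (1 - δ)) x := by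
  have hΦ : ∀ y, HasDerivAt stdNormalCDF (gaussianPDFReal 0 1 y) y :=
    hasDerivAt_cdf_gaussianReal 0 one_ne_zero
  exact (((hΦ x).const_mul 2).sub ((hΦ _).comp x (hasDerivAt_mul_const (1 + δ)))).sub
    ((hΦ _).comp x (hasDerivAt_mul_const (1 - δ)))

lemma phi_deriv_pos {δ x : ℝ} (hδ : 1 ≤ δ) (hx : 0 < x) :
    0 < 2 * gaussianPDFReal 0 1 x - gaussianPDFReal 0 1 (x * (1 + δ)) * (1 + δ)
        - gaussianPDFReal 0 1 (x * (1 - δ)) * (1 - δ) := by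
  have hfar : gaussianPDFReal 0 1 (x * (1 + δ)) < gaussianPDFReal 0 1 x :=
    gaussianPDFReal_lt_of_sq_lt one_ne_zero (by
      rw [sub_zero, sub_zero]; exact pow_lt_pow_left₀ (lt_mul_of_one_lt_right hx (by linarith)) hx.le two_ne_zero)
  have hnear : gaussianPDFReal 0 1 (x * (1 + δ)) ≤ gaussianPDFReal 0 1 (x * (1 - δ)) :=
    gaussianPDFReal_le_of_sq_le (by
      rw [sub_zero, sub_zero]; nlinarith [mul_nonneg (mul_pos hx hx).le (by linarith : (0 : ℝ) ≤ δ)])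
  linarith [mul_le_mul_of_nonneg_left hnear (sub_nonneg.mpr hδ)]

lemma phi_strictMonoOn {δ : ℝ} (hδ : 1 ≤ δ) : StrictMonoOn (phi δ) (Set.Ici 0) := by
  refine strictMonoOn_of_deriv_pos (convex_Ici 0)
    (fun x _ => (hasDerivAt_phi δ x).continuousAt.continuousWithinAt) fun x hx => ?_
  rw [interior_Ici] at hx
  rw [(hasDerivAt_phi δ x).deriv]
  exact phi_deriv_pos hδ hx

theorem berStrip_strong_adversary_general (d : ℕ) (W ε : ℝ) (θ : Fin d → ℝ) (τ : ℝ)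
    (hW : 0 < W) (hθ : ∀ j, 0 ≤ θ j) (hτ : τ ∈ Set.Ioo (0 : ℝ) 1)
    (hθne : θ ≠ 0) (hstrong : ∀ j, θ j ≤ ε / τ) :
    ∀ m n : ℕ, 1 ≤ m → m < n →
      berStrip d W ε θ τ m < berStrip d W ε θ τ n := by
  obtain ⟨hτ0, hτ1⟩ := hτ
  intro m n _ hmn
  have hden : 0 < √(1 - τ ^ 2) := Real.sqrt_pos.mpr (by nlinarith)
  have hx_nonneg : 0 ≤ τ * √m / √(1 - τ ^ 2) := by positivity
  have hx_lt : τ * √m / √(1 - τ ^ 2) < τ * √n / √(1 - τ ^ 2) := by gcongr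
  have hδ : ∀ j, 0 < θ j → 1 ≤ ε / (θ j * τ) := fun j hj => by
    rw [one_le_div (by positivity), ← le_div_iff₀ hτ0]
    exact hstrong j
  have hsupport : (Finset.univ.filter fun j => 0 < θ j).Nonempty := by
    obtain ⟨j, hj⟩ := Function.ne_iff.mp hθne
    exact ⟨j, Finset.mem_filter.mpr ⟨Finset.mem_univ j, (hθ j).lt_of_ne' hj⟩⟩
  refine mul_lt_mul_of_pos_left (Finset.sum_lt_sum_of_nonempty hsupport fun j hj => ?_)
    (by positivity)
  have hj := (Finset.mem_filter.mp hj).2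
  exact mul_lt_mul_of_pos_left
    (phi_strictMonoOn (hδ j hj) hx_nonneg (hx_nonneg.trans hx_lt.le) hx_lt) hj

/-- In the strong adversary regime `ε/τ ≥ ‖θ‖_∞` (i.e. `θ(j) ≤ ε/τ` for all `j`, as
`θ ≥ 0`), the strip center `s_n` is strictly increasing for all `n ≥ 1`. -/
theorem berStrip_strong_adversary (d : ℕ) (W ε : ℝ) (θ : Fin d → ℝ) (τ : ℝ)
    (hW : 0 < W) (hε : 0 < ε) (hθ : ∀ j, 0 ≤ θ j) (hτ : τ ∈ Set.Ioo (0 : ℝ) 1)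
    (hθne : θ ≠ 0) (hstrong : ∀ j, θ j ≤ ε / τ) :
    ∀ m n : ℕ, 1 ≤ m → m < n →
      berStrip d W ε θ τ m < berStrip d W ε θ τ n :=
  berStrip_strong_adversary_general d W ε θ τ hW hθ hτ hθne hstrong
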